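/- arXiv:1907.01581 — 13 statements merged into one kernel-verified Lean document; each statement's English description precedes it below -/
import Mathlib

section
/- A set S of vertices of a finite simple graph G is digitally convex if and only if S = V(G) \ N[W] for some set W ⊆ V(G). -/
def closedNbhd {V : Type*} (G : SimpleGraph V) (S : Set V) : Set V :=
  {u | ∃ s ∈ S, u = s ∨ G.Adj u s}

/-- `S` is digitally convex if for every vertex `v`, `N[v] ⊆ N[S]` implies `v ∈ S`. -/
def digitallyConvex {V : Type*} (G : SimpleGraph V) (S : Set V) : Prop :=
  ∀ v, closedNbhd G {v} ⊆ closedNbhd G S → v ∈ S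

theorem stmt_1 {V : Type*} [Fintype V] (G : SimpleGraph V) (S : Set V) :
    digitallyConvex G S ↔ ∃ W : Set V, S = (closedNbhd G W)ᶜ := by
  constructor
  · intro hS
    refine ⟨(closedNbhd G S)ᶜ, ?_⟩
    apply Set.eq_of_subset_of_subset
    · intro s hs hmem
      obtain ⟨w, hw, hsw⟩ := hmem
      apply hw
      exact ⟨s, hs, by rcases hsw with h | h; exact Or.inl h.symm; exact Or.inr h.symm⟩
    · intro v hv
      apply hS
      intro u hu
      obtain ⟨x, hx, hux⟩ := hu
      rw [Set.mem_singleton_iff] at hx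
      subst hx
      by_contra huS
      apply hv
      exact ⟨u, huS, by rcases hux with h | h; exact Or.inl h.symm; exact Or.inr h.symm⟩
  · rintro ⟨W, rfl⟩
    intro v hv hmem
    obtain ⟨w, hw, hvw⟩ := hmem
    have hwv : w ∈ closedNbhd G {v} :=
      ⟨v, rfl, by rcases hvw with h | h; exact Or.inl h.symm; exact Or.inr h.symm⟩
    obtain ⟨s, hs, hws⟩ := hv hwv
    apply hs
    exact ⟨w, hw, by rcases hws with h | h; exact Or.inl h.symm; exact Or.inr h.symm⟩
end

section
/- If {V₁, V₂} is a digitally convex 2-partition of a connected graph G, then for the edge u₁u₂ with u₁ ∈ V₁ and u₂ ∈ V₂, there exist v₁ ∈ V₁ adjacent to u₁ and v₂ ∈ V₂ adjacent to u₂ such that v₁, u₁, u₂, v₂ is an induced path of length 3 in G. -/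
theorem stmt_6 {V : Type*} [Fintype V] (G : SimpleGraph V) (hG : G.Connected)
    (V₁ V₂ : Set V)
    (h₁ : digitallyConvex G V₁) (h₂ : digitallyConvex G V₂)
    (hp₁ : V₁ ≠ Set.univ) (hp₂ : V₂ ≠ Set.univ)
    (hdisj : Disjoint V₁ V₂) (hunion : V₁ ∪ V₂ = Set.univ)
    (hne₁ : V₁.Nonempty) (hne₂ : V₂.Nonempty)
    (u₁ u₂ : V) (hu₁ : u₁ ∈ V₁) (hu₂ : u₂ ∈ V₂) (huv : G.Adj u₁ u₂) :
    ∃ v₁ ∈ V₁, ∃ v₂ ∈ V₂, G.Adj v₁ u₁ ∧ G.Adj u₂ v₂ ∧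
      ¬ G.Adj v₁ u₂ ∧ ¬ G.Adj u₁ v₂ ∧ ¬ G.Adj v₁ v₂ := by
  have hu₁n₂ : u₁ ∉ V₂ := fun h => (hdisj.ne_of_mem hu₁ h) rfl
  have hu₂n₁ : u₂ ∉ V₁ := fun h => (hdisj.ne_of_mem h hu₂) rfl
  -- witness x for u₁ against V₂
  have hx : ¬ (closedNbhd G {u₁} ⊆ closedNbhd G V₂) := fun h => hu₁n₂ (h₂ u₁ h)
  rw [Set.not_subset] at hx
  obtain ⟨x, hx1, hx2⟩ := hx
  obtain ⟨s, hs, hxs⟩ := hx1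
  rw [Set.mem_singleton_iff] at hs; rw [hs] at hxs
  have hxN : ∀ t ∈ V₂, x ≠ t ∧ ¬ G.Adj x t := by
    intro t ht
    constructor
    · rintro rfl; exact hx2 ⟨_, ht, Or.inl rfl⟩
    · intro ha; exact hx2 ⟨t, ht, Or.inr ha⟩
  have hxu : G.Adj x u₁ := by
    rcases hxs with rfl | h
    · exact absurd (⟨u₂, hu₂, Or.inr huv⟩ : x ∈ closedNbhd G V₂) hx2
    · exact h
  have hxV₁ : x ∈ V₁ := by
    have := Set.mem_univ x
    rw [← hunion] at this
    rcases this with h | h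
    · exact h
    · exact absurd rfl (hxN x h).1
  -- witness y for u₂ against V₁
  have hy : ¬ (closedNbhd G {u₂} ⊆ closedNbhd G V₁) := fun h => hu₂n₁ (h₁ u₂ h)
  rw [Set.not_subset] at hy
  obtain ⟨y, hy1, hy2⟩ := hy
  obtain ⟨s, hs, hys⟩ := hy1
  rw [Set.mem_singleton_iff] at hs; rw [hs] at hys
  have hyN : ∀ t ∈ V₁, y ≠ t ∧ ¬ G.Adj y t := by
    intro t ht
    constructor
    · rintro rfl; exact hy2 ⟨_, ht, Or.inl rfl⟩
    · intro ha; exact hy2 ⟨t, ht, Or.inr ha⟩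
  have hyu : G.Adj y u₂ := by
    rcases hys with rfl | h
    · exact absurd (⟨u₁, hu₁, Or.inr huv.symm⟩ : y ∈ closedNbhd G V₁) hy2
    · exact h
  have hyV₂ : y ∈ V₂ := by
    have := Set.mem_univ y
    rw [← hunion] at this
    rcases this with h | h
    · exact absurd rfl (hyN y h).1
    · exact h
  exact ⟨x, hxV₁, y, hyV₂, hxu, hyu.symm, (hxN u₂ hu₂).2,
    fun h => (hyN u₁ hu₁).2 h.symm, fun h => (hyN x hxV₁).2 h.symm⟩
end

section
/- If a connected graph G has a digitally convex 2-partition, then G has diameter at least 3. -/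
namespace SimpleGraph

variable {V : Type*} {G : SimpleGraph V} {S : Set V} {u v : V}

lemma mem_closedNbhd_singleton : u ∈ closedNbhd G {v} ↔ u = v ∨ G.Adj u v := by
  simp [closedNbhd]

lemma closedNbhd_ne_univ_of_digitallyConvex (hS : digitallyConvex G S) (hS_ne : S ≠ Set.univ) :
    closedNbhd G S ≠ Set.univ := by
  intro hN
  refine hS_ne (Set.eq_univ_of_forall fun v ↦ hS v ?_)
  rw [hN]
  exact Set.subset_univ _

lemma closedNbhd_singleton_subset_compl_of_notMem (hv : v ∉ closedNbhd G S) :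
    closedNbhd G {v} ⊆ Sᶜ := by
  rintro u hu huS
  refine hv ⟨u, huS, ?_⟩
  rcases mem_closedNbhd_singleton.mp hu with rfl | hadj
  · exact Or.inl rfl
  · exact Or.inr hadj.symm

lemma Reachable.three_le_dist_of_disjoint_closedNbhd (hr : G.Reachable u v)
    (h : Disjoint (closedNbhd G {u}) (closedNbhd G {v})) : 3 ≤ G.dist u v := by
  have hmem : ∀ {w}, w ∈ closedNbhd G {u} → w ∈ closedNbhd G {v} → False :=
    fun hu hv ↦ Set.disjoint_left.mp h hu hv
  have hne : u ≠ v := fun huv ↦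
    hmem (mem_closedNbhd_singleton.mpr (Or.inl rfl)) (mem_closedNbhd_singleton.mpr (Or.inl huv))
  have hnadj : ¬G.Adj u v := fun hadj ↦
    hmem (mem_closedNbhd_singleton.mpr (Or.inr hadj.symm))
      (mem_closedNbhd_singleton.mpr (Or.inl rfl))
  have hcommon : G.commonNeighbors u v = ∅ := by
    refine Set.eq_empty_of_forall_notMem fun w hw ↦ ?_
    rw [mem_commonNeighbors] at hw
    exact hmem (mem_closedNbhd_singleton.mpr (Or.inr hw.1.symm))
      (mem_closedNbhd_singleton.mpr (Or.inr hw.2.symm))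
  have h2 : 2 < G.edist u v := two_lt_edist_iff.mpr ⟨hne, hnadj, hcommon⟩
  rw [← hr.coe_dist_eq_edist] at h2
  exact_mod_cast h2

end SimpleGraph

open SimpleGraph in
theorem stmt_7_general {V : Type*} (G : SimpleGraph V) (hG : G.Connected)
    (V₁ V₂ : Set V)
    (h₁ : digitallyConvex G V₁) (h₂ : digitallyConvex G V₂)
    (hp₁ : V₁ ≠ Set.univ) (hp₂ : V₂ ≠ Set.univ)
    (hunion : V₁ ∪ V₂ = Set.univ) :
    ∃ u v : V, 3 ≤ G.dist u v := by
  obtain ⟨w, hw⟩ := (Set.ne_univ_iff_exists_notMem _).mp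
    (closedNbhd_ne_univ_of_digitallyConvex h₁ hp₁)
  obtain ⟨x, hx⟩ := (Set.ne_univ_iff_exists_notMem _).mp
    (closedNbhd_ne_univ_of_digitallyConvex h₂ hp₂)
  have hcompl : Disjoint V₁ᶜ V₂ᶜ :=
    Set.disjoint_compl_left_iff_subset.mpr <|
      Set.compl_subset_iff_union.mpr ((Set.union_comm V₂ V₁).trans hunion)
  refine ⟨w, x, (hG w x).three_le_dist_of_disjoint_closedNbhd ?_⟩
  exact hcompl.mono (closedNbhd_singleton_subset_compl_of_notMem hw)
    (closedNbhd_singleton_subset_compl_of_notMem hx)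

theorem stmt_7 {V : Type*} [Fintype V] (G : SimpleGraph V) (hG : G.Connected)
    (V₁ V₂ : Set V)
    (h₁ : digitallyConvex G V₁) (h₂ : digitallyConvex G V₂)
    (hp₁ : V₁ ≠ Set.univ) (hp₂ : V₂ ≠ Set.univ)
    (hdisj : Disjoint V₁ V₂) (hunion : V₁ ∪ V₂ = Set.univ) :
    ∃ u v : V, 3 ≤ G.dist u v :=
  stmt_7_general G hG V₁ V₂ h₁ h₂ hp₁ hp₂ hunion
end

section
/- A connected bipartite graph G has a digitally convex 2-partition if and only if G has diameter at least 3. -/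
lemma walk_parity {V : Type*} {G : SimpleGraph V} (C : G.Coloring (Fin 2)) :
    ∀ {a b : V} (p : G.Walk a b), (Even p.length ↔ C a = C b) := by
  intro a b p
  induction p with
  | nil => simp
  | @cons a x b h q ih =>
    rw [SimpleGraph.Walk.length_cons, Nat.even_add_one, ih]
    have hax : C a ≠ C x := C.valid h
    have key : ∀ x y z : Fin 2, x ≠ y → ((¬ (y = z)) ↔ (x = z)) := by decide
    exact key _ _ _ hax

lemma adj_dist_ne {V : Type*} {G : SimpleGraph V} (hG : G.Connected)
    (C : G.Coloring (Fin 2)) {t s v : V} (h : G.Adj t s) :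
    G.dist t v ≠ G.dist s v := by
  obtain ⟨p, hp⟩ := (hG t v).exists_walk_length_eq_dist
  obtain ⟨q, hq⟩ := (hG s v).exists_walk_length_eq_dist
  have h1 : Even (G.dist t v) ↔ C t = C v := by rw [← hp]; exact walk_parity C p
  have h2 : Even (G.dist s v) ↔ C s = C v := by rw [← hq]; exact walk_parity C q
  intro heq
  rw [heq, h2] at h1
  have hts : C t ≠ C s := C.valid h
  have key : ∀ x y z : Fin 2, x ≠ y → ((y = z) ↔ (x = z)) → False := by decide
  exact key _ _ _ hts h1

theorem stmt_8 {V : Type*} [Fintype V] (G : SimpleGraph V) (hG : G.Connected)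
    (hbip : G.Colorable 2) :
    (∃ V₁ V₂ : Set V, digitallyConvex G V₁ ∧ digitallyConvex G V₂ ∧
        V₁ ≠ Set.univ ∧ V₂ ≠ Set.univ ∧ Disjoint V₁ V₂ ∧ V₁ ∪ V₂ = Set.univ) ↔
      ∃ u v : V, 3 ≤ G.dist u v := by
  have adj_dist_le_one : ∀ {x y : V}, G.Adj x y → G.dist x y ≤ 1 := by
    intro x y h
    have := SimpleGraph.dist_le (SimpleGraph.Walk.cons h SimpleGraph.Walk.nil)
    simpa using this
  constructor
  · rintro ⟨V₁, V₂, dc1, dc2, ne1, ne2, disj, cover⟩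
    -- get private vertices
    have priv : ∀ (S T : Set V), digitallyConvex G S → S ≠ Set.univ →
        S ∪ T = Set.univ → ∃ w : V, closedNbhd G {w} ⊆ T := by
      intro S T dc hne hcov
      obtain ⟨x, hx⟩ : ∃ x, x ∉ S := by
        by_contra h
        push_neg at h
        exact hne (Set.eq_univ_of_forall h)
      have hnot : ¬ closedNbhd G {x} ⊆ closedNbhd G S := fun h => hx (dc x h)
      obtain ⟨w, hw1, hw2⟩ := Set.not_subset.mp hnot
      refine ⟨w, fun z hz => ?_⟩
      obtain ⟨s, hs, hzs⟩ := hz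
      rw [Set.mem_singleton_iff] at hs
      subst hs
      have hzS : z ∉ S := by
        intro hzS
        apply hw2
        exact ⟨z, hzS, by rcases hzs with h | h; exact Or.inl h.symm; exact Or.inr h.symm⟩
      have : z ∈ S ∪ T := hcov ▸ Set.mem_univ z
      rcases this with h | h
      · exact absurd h hzS
      · exact h
    obtain ⟨w, hw⟩ := priv V₁ V₂ dc1 ne1 cover
    obtain ⟨w', hw'⟩ := priv V₂ V₁ dc2 ne2 (by rw [Set.union_comm]; exact cover)
    refine ⟨w, w', ?_⟩
    by_contra hlt
    push_neg at hlt
    obtain ⟨p, hp⟩ := (hG w w').exists_walk_length_eq_dist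
    have hplen : p.length ≤ 2 := by omega
    have hmemw : ∀ z, z = w ∨ G.Adj z w → z ∈ V₂ := by
      intro z h; exact hw ⟨w, rfl, h⟩
    have hmemw' : ∀ z, z = w' ∨ G.Adj z w' → z ∈ V₁ := by
      intro z h; exact hw' ⟨w', rfl, h⟩
    have hww' : w ≠ w' ∧ ¬ G.Adj w w' ∧ ∀ z, G.Adj w z → ¬ G.Adj z w' := by
      refine ⟨?_, ?_, ?_⟩
      · intro h
        have h1 : w ∈ V₂ := hmemw w (Or.inl rfl)
        have h2 : w ∈ V₁ := hmemw' w (Or.inl h)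
        exact Set.disjoint_left.mp disj h2 h1
      · intro h
        have h1 : w' ∈ V₂ := hmemw w' (Or.inr h.symm)
        have h2 : w' ∈ V₁ := hmemw' w' (Or.inl rfl)
        exact Set.disjoint_left.mp disj h2 h1
      · intro z h1 h2
        have hz1 : z ∈ V₂ := hmemw z (Or.inr h1.symm)
        have hz2 : z ∈ V₁ := hmemw' z (Or.inr h2)
        exact Set.disjoint_left.mp disj hz2 hz1
    obtain ⟨hne, hnadj, hno2⟩ := hww'
    cases p with
    | nil => exact hne rfl
    | cons h q =>
      cases q with
      | nil => exact hnadj h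
      | cons h' q' =>
        cases q' with
        | nil => exact hno2 _ h h'
        | cons h'' q'' => simp [SimpleGraph.Walk.length_cons] at hplen
  · rintro ⟨u, v, huv⟩
    obtain ⟨C⟩ := hbip
    set A : Set V := {w | 3 ≤ G.dist w v} with hA
    refine ⟨(closedNbhd G A)ᶜ, closedNbhd G A, ?_, ?_, ?_, ?_,
      disjoint_compl_left, Set.compl_union_self _⟩
    · -- V₁ = N[A]ᶜ digitally convex
      intro t ht
      by_contra htc
      have htN : t ∈ closedNbhd G A := by simpa using htc
      obtain ⟨a, ha, hta⟩ := htN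
      have haN : a ∈ closedNbhd G {t} := by
        refine ⟨t, rfl, ?_⟩
        rcases hta with h | h
        · exact Or.inl h.symm
        · exact Or.inr h.symm
      obtain ⟨s, hs, has⟩ := ht haN
      apply hs
      rcases has with h | h
      · exact ⟨a, ha, Or.inl h.symm⟩
      · exact ⟨a, ha, Or.inr h.symm⟩
    · -- V₂ = N[A] digitally convex
      intro t ht
      by_contra htN
      -- t not in N[A]; derive contradiction
      have htA : t ∉ A := fun h => htN ⟨t, h, Or.inl rfl⟩
      have hdt : G.dist t v ≤ 2 := by
        by_contra h
        push_neg at h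
        exact htA (show 3 ≤ G.dist t v by omega)
      -- helper: anything in N[N[A]] is within distance 2 of A-ish facts
      rcases Nat.lt_or_ge (G.dist t v) 2 with hd1 | hd2
      · -- dist t v ≤ 1 : use w = v
        have hvN : v ∈ closedNbhd G {t} := by
          refine ⟨t, rfl, ?_⟩
          interval_cases h : G.dist t v
          · left
            exact ((hG t v).dist_eq_zero_iff.mp h).symm
          · right
            exact (SimpleGraph.dist_eq_one_iff_adj.mp h).symm
        obtain ⟨s, hsN, hvs⟩ := ht hvN
        obtain ⟨a, ha, hsa⟩ := hsN
        have h3 : 3 ≤ G.dist a v := ha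
        have hsv : G.dist s v ≤ 1 := by
          rcases hvs with h | h
          · rw [h]; simp [SimpleGraph.dist_self]
          · rw [SimpleGraph.dist_comm]; exact adj_dist_le_one h
        have has : G.dist a s ≤ 1 := by
          rcases hsa with h | h
          · rw [h]; simp [SimpleGraph.dist_self]
          · rw [SimpleGraph.dist_comm]; exact adj_dist_le_one h
        have := hG.dist_triangle (u := a) (v := s) (w := v)
        omega
      · -- dist t v = 2 : use w = t
        have hd2' : G.dist t v = 2 := by omega
        have htself : t ∈ closedNbhd G {t} := ⟨t, rfl, Or.inl rfl⟩
        obtain ⟨s, hsN, hts⟩ := ht htself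
        rcases hts with h | h
        · exact htN (h ▸ hsN)
        · -- t adjacent to s, s ∈ N[A]
          obtain ⟨a, ha, hsa⟩ := hsN
          have h3 : 3 ≤ G.dist a v := ha
          rcases hsa with rfl | hadj
          · exact htN ⟨s, ha, Or.inr h⟩
          · -- adj t s, adj s a
            have hs_lb : 2 ≤ G.dist s v := by
              have htri := hG.dist_triangle (u := a) (v := s) (w := v)
              have : G.dist a s ≤ 1 := by
                rw [SimpleGraph.dist_comm]; exact adj_dist_le_one hadj
              omega
            have hs_ub : G.dist s v ≤ 3 := by
              have htri := hG.dist_triangle (u := s) (v := t) (w := v)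
              have : G.dist s t ≤ 1 := by
                rw [SimpleGraph.dist_comm]; exact adj_dist_le_one h
              omega
            have hne := adj_dist_ne hG C h (v := v)
            rw [hd2'] at hne
            have hs3 : G.dist s v = 3 := by omega
            exact htN ⟨s, hs3.ge, Or.inr h⟩
    · -- V₁ ≠ univ since u ∈ N[A]
      intro h
      have hu : u ∈ closedNbhd G A := ⟨u, huv, Or.inl rfl⟩
      have : u ∈ (closedNbhd G A)ᶜ := h ▸ Set.mem_univ u
      exact this hu
    · -- V₂ ≠ univ since v ∉ N[A]
      intro h
      have hv : v ∈ closedNbhd G A := h ▸ Set.mem_univ v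
      obtain ⟨a, ha, hva⟩ := hv
      have h3 : 3 ≤ G.dist a v := ha
      have : G.dist a v ≤ 1 := by
        rcases hva with h' | h'
        · rw [← h']; simp [SimpleGraph.dist_self]
        · exact adj_dist_le_one h'.symm
      omega
end

section
/- Let G be a connected bipartite graph with bipartition {X, Y}, and let u, v be vertices with d(u,v) = 3. Let V₁ = N[u] ∪ {x ∈ X : N(x) ⊆ N[u]} and V₂ = V(G) \ V₁ (assuming u ∈ X without loss of generality). Then {V₁, V₂} is a digitally convex 2-partition of G. -/
theorem stmt_9 {V : Type*} [Fintype V] (G : SimpleGraph V) (hG : G.Connected)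
    (X Y : Set V) (hXY : X ∪ Y = Set.univ) (hdXY : Disjoint X Y)
    (hbip : ∀ a b, G.Adj a b → (a ∈ X ∧ b ∈ Y) ∨ (a ∈ Y ∧ b ∈ X))
    (u v : V) (hu : u ∈ X) (hd : G.dist u v = 3)
    (V₁ V₂ : Set V)
    (hV₁ : V₁ = closedNbhd G {u} ∪ {x | x ∈ X ∧ G.neighborSet x ⊆ closedNbhd G {u}})
    (hV₂ : V₂ = V₁ᶜ) :
    digitallyConvex G V₁ ∧ digitallyConvex G V₂ ∧
      V₁ ≠ Set.univ ∧ V₂ ≠ Set.univ ∧ Disjoint V₁ V₂ ∧ V₁ ∪ V₂ = Set.univ := by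
  have hdisj : ∀ z, z ∈ X → z ∈ Y → False := fun z hx hy =>
    Set.disjoint_left.mp hdXY hx hy
  have hXYmem : ∀ z : V, z ∈ X ∨ z ∈ Y := by
    intro z
    have : z ∈ X ∪ Y := hXY ▸ Set.mem_univ z
    exact this
  have hadjXY : ∀ a b, G.Adj a b → a ∈ X → b ∈ Y := by
    intro a b hab ha
    rcases hbip a b hab with ⟨_, hb⟩ | ⟨ha', _⟩
    · exact hb
    · exact absurd ha' (fun h => hdisj a ha h)
  have hadjYX : ∀ a b, G.Adj a b → a ∈ Y → b ∈ X := by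
    intro a b hab ha
    rcases hbip a b hab with ⟨ha', _⟩ | ⟨_, hb⟩
    · exact absurd ha (fun h => hdisj a ha' h)
    · exact hb
  -- membership in closedNbhd of a singleton
  have hsing : ∀ z w : V, z ∈ closedNbhd G {w} ↔ z = w ∨ G.Adj z w := by
    intro z w
    constructor
    · rintro ⟨s, hs, h⟩
      rcases hs with rfl
      exact h
    · intro h
      exact ⟨w, rfl, h⟩
  -- u belongs to V₁
  have huV₁ : u ∈ V₁ := by
    rw [hV₁]
    exact Or.inl ((hsing u u).mpr (Or.inl rfl))
  -- N(u) ⊆ V₁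
  have hNu : ∀ z, G.Adj z u → z ∈ V₁ := by
    intro z hz
    rw [hV₁]
    exact Or.inl ((hsing z u).mpr (Or.inr hz))
  -- Key Lemma A : any z ∈ Y in the closed nbhd of V₁ is adjacent to u
  have lemA : ∀ z, z ∈ Y → z ∈ closedNbhd G V₁ → G.Adj z u := by
    rintro z hzY ⟨s, hsV₁, hzs⟩
    rw [hV₁] at hsV₁
    rcases hzs with rfl | hadj
    · -- z = s ∈ V₁
      rcases hsV₁ with hs | hs
      · rcases (hsing z u).mp hs with rfl | h
        · exact absurd hu (fun h => hdisj z h hzY)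
        · exact h
      · exact absurd hs.1 (fun h => hdisj z h hzY)
    · -- z adjacent to s ∈ V₁
      have hsX : s ∈ X := hadjYX z s hadj hzY
      rcases hsV₁ with hs | hs
      · rcases (hsing s u).mp hs with rfl | h
        · exact hadj
        · exact absurd (hadjXY u s h.symm hu) (fun h' => hdisj s hsX h')
      · -- s in the second part: N(s) ⊆ N[u]
        have : z ∈ closedNbhd G {u} := hs.2 hadj.symm
        rcases (hsing z u).mp this with rfl | h
        · exact absurd hu (fun h => hdisj z h hzY)
        · exact h
  -- Key Lemma B : x ∈ V₁ ∩ X is not in the closed nbhd of V₂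
  have lemB : ∀ x, x ∈ V₁ → x ∈ X → x ∉ closedNbhd G V₂ := by
    rintro x hxV₁ hxX ⟨s, hsV₂, hxs⟩
    rw [hV₂] at hsV₂
    rcases hxs with rfl | hadj
    · exact hsV₂ hxV₁
    · -- x adjacent to s ∉ V₁ ; but N(x) ⊆ V₁
      rw [hV₁] at hxV₁
      rcases hxV₁ with hx | hx
      · rcases (hsing x u).mp hx with rfl | h
        · exact hsV₂ (hNu s hadj.symm)
        · exact absurd (hadjXY x u h hxX) (fun h' => hdisj u hu h')
      · exact hsV₂ (by rw [hV₁]; exact Or.inl (hx.2 hadj))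
  -- digitally convex V₁
  have dc1 : digitallyConvex G V₁ := by
    intro w hw
    rcases hXYmem w with hwX | hwY
    · -- w ∈ X : show all neighbors of w are in N[u]
      rw [hV₁]
      right
      refine ⟨hwX, ?_⟩
      intro z hz
      have hzY : z ∈ Y := hadjXY w z hz hwX
      have : z ∈ closedNbhd G V₁ := hw ((hsing z w).mpr (Or.inr hz.symm))
      exact (hsing z u).mpr (Or.inr (lemA z hzY this))
    · have : w ∈ closedNbhd G V₁ := hw ((hsing w w).mpr (Or.inl rfl))
      exact hNu w (lemA w hwY this)
  -- digitally convex V₂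
  have dc2 : digitallyConvex G V₂ := by
    intro w hw
    rw [hV₂]
    intro hwV₁
    rcases hXYmem w with hwX | hwY
    · exact lemB w hwV₁ hwX (hw ((hsing w w).mpr (Or.inl rfl)))
    · -- w ∈ V₁ ∩ Y, so w adjacent to u
      have hwu : G.Adj w u := by
        rw [hV₁] at hwV₁
        rcases hwV₁ with h | h
        · rcases (hsing w u).mp h with rfl | h'
          · exact absurd hu (fun h => hdisj w h hwY)
          · exact h'
        · exact absurd h.1 (fun h => hdisj w h hwY)
      exact lemB u huV₁ hu (hw ((hsing u w).mpr (Or.inr hwu.symm)))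
  -- facts from dist u v = 3
  have hne : v ≠ u := by
    rintro rfl
    rw [SimpleGraph.dist_self] at hd
    exact absurd hd (by norm_num)
  have hnadj : ¬ G.Adj v u := by
    intro h
    have := SimpleGraph.dist_le h.symm.toWalk
    simp only [SimpleGraph.Walk.length_cons, SimpleGraph.Walk.length_nil] at this
    omega
  -- v has a neighbor
  obtain ⟨p, hp⟩ := SimpleGraph.exists_walk_of_dist_ne_zero (by omega : G.dist u v ≠ 0)
  have hnbr : ∃ y, G.Adj v y := by
    cases hq : p.reverse with
    | nil =>
      exfalso
      have := SimpleGraph.Walk.length_reverse p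
      rw [hq] at this
      simp at this
      omega
    | cons h q => exact ⟨_, h⟩
  obtain ⟨y, hvy⟩ := hnbr
  -- v ∉ V₁
  have hvV₁ : v ∉ V₁ := by
    rw [hV₁]
    rintro (h | h)
    · rcases (hsing v u).mp h with rfl | h'
      · exact hne rfl
      · exact hnadj h'
    · -- N(v) ⊆ N[u], so dist u v ≤ 2
      have hy : y ∈ closedNbhd G {u} := h.2 hvy
      have hdist_yv : G.dist y v ≤ 1 := by
        have := SimpleGraph.dist_le hvy.symm.toWalk
        simpa using this
      have hdist_uy : G.dist u y ≤ 1 := by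
        rcases (hsing y u).mp hy with rfl | h'
        · rw [SimpleGraph.dist_self]; omega
        · have := SimpleGraph.dist_le h'.symm.toWalk
          simpa using this
      have htri := hG.dist_triangle (u := u) (v := y) (w := v)
      omega
  refine ⟨dc1, dc2, ?_, ?_, ?_, ?_⟩
  · intro h
    exact hvV₁ (h ▸ Set.mem_univ v)
  · intro h
    rw [hV₂] at h
    have : u ∈ V₁ᶜ := h ▸ Set.mem_univ u
    exact this huV₁
  · rw [hV₂]
    exact disjoint_compl_right
  · rw [hV₂]
    exact Set.union_compl_self V₁
end

section
/- A graph G has a P₃-convex 2-partition if and only if G has a matching cut, i.e., a partition (X,Y) of V(G) into two nonempty sets such that the set of edges with one endpoint in X and the other in Y forms a matching. -/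
/-- `S` is `P₃`-convex: any vertex adjacent to two distinct vertices of `S` is in `S`. -/
def p3Convex {V : Type*} (G : SimpleGraph V) (S : Set V) : Prop :=
  ∀ a b c, a ∈ S → c ∈ S → a ≠ c → G.Adj a b → G.Adj b c → b ∈ S

theorem stmt_10 {V : Type*} [Fintype V] (G : SimpleGraph V) :
    (∃ V₁ V₂ : Set V, p3Convex G V₁ ∧ p3Convex G V₂ ∧
        V₁ ≠ Set.univ ∧ V₂ ≠ Set.univ ∧ Disjoint V₁ V₂ ∧ V₁ ∪ V₂ = Set.univ) ↔
      (∃ X Y : Set V, X.Nonempty ∧ Y.Nonempty ∧ Disjoint X Y ∧ X ∪ Y = Set.univ ∧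
        (∀ a ∈ X, ∀ b ∈ Y, ∀ b' ∈ Y, G.Adj a b → G.Adj a b' → b = b') ∧
        (∀ b ∈ Y, ∀ a ∈ X, ∀ a' ∈ X, G.Adj a b → G.Adj a' b → a = a')) := by
  constructor
  · rintro ⟨V₁, V₂, h1, h2, hn1, hn2, hd, hu⟩
    have hne1 : V₁.Nonempty := by
      by_contra h
      rw [Set.not_nonempty_iff_eq_empty] at h
      subst h
      simp only [Set.empty_union] at hu
      exact hn2 hu
    have hne2 : V₂.Nonempty := by
      by_contra h
      rw [Set.not_nonempty_iff_eq_empty] at h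
      subst h
      simp only [Set.union_empty] at hu
      exact hn1 hu
    refine ⟨V₁, V₂, hne1, hne2, hd, hu, ?_, ?_⟩
    · intro a ha b hb b' hb' hab hab'
      by_contra hbb
      exact Set.disjoint_left.mp hd ha (h2 b a b' hb hb' hbb hab.symm hab')
    · intro b hb a ha a' ha' hab ha'b
      by_contra haa
      exact Set.disjoint_left.mp hd (h1 a b a' ha ha' haa hab ha'b.symm) hb
  · rintro ⟨X, Y, hX, hY, hd, hu, hm1, hm2⟩
    refine ⟨X, Y, ?_, ?_, ?_, ?_, hd, hu⟩
    · intro a b c ha hc hac hab hbc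
      have hb : b ∈ X ∪ Y := hu ▸ Set.mem_univ b
      rcases hb with hb | hb
      · exact hb
      · exact absurd (hm2 b hb a ha c hc hab hbc.symm) hac
    · intro a b c ha hc hac hab hbc
      have hb : b ∈ X ∪ Y := hu ▸ Set.mem_univ b
      rcases hb with hb | hb
      · exact absurd (hm1 b hb a ha c hc hab.symm hbc) hac
      · exact hb
    · intro h
      obtain ⟨y, hy⟩ := hY
      exact Set.disjoint_right.mp hd hy (h ▸ Set.mem_univ y)
    · intro h
      obtain ⟨x, hx⟩ := hX
      exact Set.disjoint_left.mp hd hx (h ▸ Set.mem_univ x)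
end

section
/- Let G be a split graph with split partition (K, S) where every vertex of S has degree at least 2, and let p ≥ 2. If {V₁, ..., V_p} is a P₃-convex p-cover of G, then every V_i is an independent set of G. -/
/-- A set of pairwise nonadjacent vertices. -/
def indepSet {V : Type*} (G : SimpleGraph V) (S : Set V) : Prop :=
  ∀ a ∈ S, ∀ b ∈ S, ¬ G.Adj a b

theorem stmt_12 {V : Type*} [Fintype V] (G : SimpleGraph V) [DecidableRel G.Adj]
    (K S : Set V) (hK : G.IsClique K) (hS : indepSet G S)
    (hKS : K ∪ S = Set.univ) (hdKS : Disjoint K S)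
    (hdeg : ∀ s ∈ S, 2 ≤ G.degree s)
    (p : ℕ) (hp : 2 ≤ p) (F : Fin p → Set V)
    (hconv : ∀ i, p3Convex G (F i)) (hproper : ∀ i, F i ≠ Set.univ)
    (hcover : (⋃ i, F i) = Set.univ) :
    ∀ i, indepSet G (F i) := by
  intro i a ha b hb hab
  have hconvi := hconv i
  have mem_KS : ∀ x : V, x ∈ K ∨ x ∈ S := by
    intro x
    have : x ∈ K ∪ S := hKS ▸ Set.mem_univ x
    exact this
  have two_nbrs : ∀ s ∈ S, ∃ k1 k2, k1 ≠ k2 ∧ G.Adj s k1 ∧ G.Adj s k2 := by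
    intro s hs
    have h2 := hdeg s hs
    rw [← SimpleGraph.card_neighborFinset_eq_degree] at h2
    obtain ⟨k1, h1, k2, hh2, hne⟩ := Finset.one_lt_card.mp (lt_of_lt_of_le one_lt_two h2)
    exact ⟨k1, k2, hne, (G.mem_neighborFinset s k1).mp h1,
      (G.mem_neighborFinset s k2).mp hh2⟩
  have nbr_in_K : ∀ s ∈ S, ∀ x, G.Adj s x → x ∈ K := by
    intro s hs x hx
    rcases mem_KS x with h | h
    · exact h
    · exact absurd hx (hS s hs x h)
  -- find two distinct K-vertices in F i
  have key : ∀ u v, u ∈ F i → v ∈ F i → G.Adj u v → u ∈ K → v ∈ S →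
      ∃ u v, u ∈ K ∧ v ∈ K ∧ u ∈ F i ∧ v ∈ F i ∧ u ≠ v := by
    intro u v hu hv huv huK hvS
    obtain ⟨k1, k2, hne, h1, h2⟩ := two_nbrs v hvS
    obtain ⟨k, hk, hkadj⟩ : ∃ k, k ≠ u ∧ G.Adj v k := by
      by_cases h : k1 = u
      · exact ⟨k2, fun he => hne (h.trans he.symm), h2⟩
      · exact ⟨k1, h, h1⟩
    have hkK : k ∈ K := nbr_in_K v hvS k hkadj
    have hkW : k ∈ F i :=
      hconvi u k v hu hv (G.ne_of_adj huv) (hK huK hkK (Ne.symm hk)) hkadj.symm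
    exact ⟨u, k, huK, hkK, hu, hkW, Ne.symm hk⟩
  obtain ⟨u, v, huK, hvK, huW, hvW, huv⟩ :
      ∃ u v, u ∈ K ∧ v ∈ K ∧ u ∈ F i ∧ v ∈ F i ∧ u ≠ v := by
    rcases mem_KS a with haK | haS
    · rcases mem_KS b with hbK | hbS
      · exact ⟨a, b, haK, hbK, ha, hb, G.ne_of_adj hab⟩
      · exact key a b ha hb hab haK hbS
    · rcases mem_KS b with hbK | hbS
      · exact key b a hb ha hab.symm hbK haS
      · exact absurd hab (hS a haS b hbS)
  have hKsub : K ⊆ F i := by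
    intro x hxK
    by_cases hxu : x = u
    · exact hxu ▸ huW
    by_cases hxv : x = v
    · exact hxv ▸ hvW
    exact hconvi u x v huW hvW huv (hK huK hxK (Ne.symm hxu)) (hK hxK hvK hxv)
  have : F i = Set.univ := by
    ext x
    simp only [Set.mem_univ, iff_true]
    rcases mem_KS x with h | h
    · exact hKsub h
    · obtain ⟨k1, k2, hne, h1, h2⟩ := two_nbrs x h
      exact hconvi k1 x k2 (hKsub (nbr_in_K x h k1 h1))
        (hKsub (nbr_in_K x h k2 h2)) hne h1.symm h2
  exact hproper i this
end

section
/- Let G be a split graph with split partition (K, S) where every vertex of S has degree at least 2, and let p ≥ 2. Then G has a P₃-convex p-partition if and only if G has a P₃-convex p-cover. -/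
theorem stmt_13 {V : Type*} [Fintype V] (G : SimpleGraph V) [DecidableRel G.Adj]
    (K S : Set V) (hK : G.IsClique K) (hS : indepSet G S)
    (hKS : K ∪ S = Set.univ) (hdKS : Disjoint K S)
    (hdeg : ∀ s ∈ S, 2 ≤ G.degree s)
    (p : ℕ) (hp : 2 ≤ p) :
    (∃ F : Fin p → Set V, (∀ i, p3Convex G (F i)) ∧ (∀ i, F i ≠ Set.univ) ∧
        (∀ i j, i ≠ j → Disjoint (F i) (F j)) ∧ (⋃ i, F i) = Set.univ) ↔
      (∃ F : Fin p → Set V, (∀ i, p3Convex G (F i)) ∧ (∀ i, F i ≠ Set.univ) ∧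
        (⋃ i, F i) = Set.univ) := by
  classical
  constructor
  · rintro ⟨F, h1, h2, _, h4⟩
    exact ⟨F, h1, h2, h4⟩
  · rintro ⟨F, hconv, hproper, hcov⟩
    have hmemKS : ∀ x : V, x ∈ K ∨ x ∈ S := by
      intro x
      have hx : x ∈ K ∪ S := by rw [hKS]; trivial
      exact hx
    have hneigh : ∀ s ∈ S, ∃ a c, a ≠ c ∧ G.Adj s a ∧ G.Adj s c ∧ a ∈ K ∧ c ∈ K := by
      intro s hs
      have h2 : 1 < (G.neighborFinset s).card := by
        rw [G.card_neighborFinset_eq_degree]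
        exact hdeg s hs
      obtain ⟨a, ha, c, hc, hac⟩ := Finset.one_lt_card.mp h2
      rw [SimpleGraph.mem_neighborFinset] at ha hc
      have hKmem : ∀ x, G.Adj s x → x ∈ K := fun x hx =>
        (hmemKS x).elim id (fun hxS => absurd hx.symm (hS x hxS s hs))
      exact ⟨a, c, hac, ha, hc, hKmem a ha, hKmem c hc⟩
    have L1 : ∀ W : Set V, p3Convex G W → ∀ k1 k2, k1 ∈ W → k2 ∈ W →
        k1 ∈ K → k2 ∈ K → k1 ≠ k2 → W = Set.univ := by
      intro W hW k1 k2 hk1 hk2 hk1K hk2K hne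
      have hKW : ∀ k ∈ K, k ∈ W := by
        intro k hk
        by_cases h1 : k = k1
        · exact h1 ▸ hk1
        by_cases h2 : k = k2
        · exact h2 ▸ hk2
        · exact hW k1 k k2 hk1 hk2 hne (hK hk1K hk (Ne.symm h1)) (hK hk hk2K h2)
      have hSW : ∀ s ∈ S, s ∈ W := by
        intro s hs
        obtain ⟨a, c, hac, hsa, hsc, haK, hcK⟩ := hneigh s hs
        exact hW a s c (hKW a haK) (hKW c hcK) hac hsa.symm hsc
      exact Set.eq_univ_iff_forall.mpr fun x => (hmemKS x).elim (hKW x) (hSW x)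
    have L2 : ∀ W : Set V, p3Convex G W → ∀ k s, k ∈ W → s ∈ W →
        k ∈ K → s ∈ S → W = Set.univ := by
      intro W hW k s hk hs hkK hsS
      obtain ⟨a, c, hac, hsa, hsc, haK, hcK⟩ := hneigh s hsS
      have hks : k ≠ s := fun h => Set.disjoint_left.mp hdKS hkK (h ▸ hsS)
      obtain ⟨b, hbK, hbne, hsb⟩ : ∃ b, b ∈ K ∧ b ≠ k ∧ G.Adj s b := by
        by_cases h : a = k
        · exact ⟨c, hcK, fun hc' => hac (h.trans hc'.symm), hsc⟩
        · exact ⟨a, haK, h, hsa⟩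
      have hbW : b ∈ W := hW k b s hk hs hks (hK hkK hbK (Ne.symm hbne)) hsb.symm
      exact L1 W hW k b hk hbW hkK hbK (Ne.symm hbne)
    refine ⟨fun i => F i \ ⋃ j, ⋃ (_ : j < i), F j, ?_, ?_, ?_, ?_⟩
    · intro i a b c ha hc hac hab hbc
      exfalso
      rcases hmemKS b with hbK | hbS
      · rcases hmemKS a with haK | haS
        · exact hproper i (L1 (F i) (hconv i) a b ha.1
            (hconv i a b c ha.1 hc.1 hac hab hbc) haK hbK hab.ne)
        · exact hproper i (L2 (F i) (hconv i) b a
            (hconv i a b c ha.1 hc.1 hac hab hbc) ha.1 hbK haS)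
      · have haK : a ∈ K := (hmemKS a).resolve_right fun haS => hS a haS b hbS hab
        have hcK : c ∈ K := (hmemKS c).resolve_right fun hcS => hS c hcS b hbS hbc.symm
        exact hproper i (L1 (F i) (hconv i) a c ha.1 hc.1 haK hcK hac)
    · intro i h
      apply hproper i
      apply Set.eq_univ_of_univ_subset
      rw [← h]
      exact Set.diff_subset
    · intro i j hij
      rcases lt_or_gt_of_ne hij with h | h
      · refine Set.disjoint_left.mpr fun x hxi hxj => ?_
        exact hxj.2 (Set.mem_iUnion.mpr ⟨i, Set.mem_iUnion.mpr ⟨h, hxi.1⟩⟩)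
      · refine Set.disjoint_left.mpr fun x hxi hxj => ?_
        exact hxi.2 (Set.mem_iUnion.mpr ⟨j, Set.mem_iUnion.mpr ⟨h, hxj.1⟩⟩)
    · apply Set.eq_univ_iff_forall.mpr
      intro x
      have hx : ∃ i, x ∈ F i :=
        Set.mem_iUnion.mp (Set.eq_univ_iff_forall.mp hcov x)
      let T : Finset (Fin p) := Finset.univ.filter fun i => x ∈ F i
      have hT : T.Nonempty := ⟨hx.choose, by simp [T, hx.choose_spec]⟩
      obtain ⟨i0, hi0mem, hi0min⟩ := T.exists_min_image id hT
      simp only [T, Finset.mem_filter] at hi0mem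
      refine Set.mem_iUnion.mpr ⟨i0, hi0mem.2, ?_⟩
      intro hmem
      obtain ⟨j, hj⟩ := Set.mem_iUnion.mp hmem
      obtain ⟨hji, hxj⟩ := Set.mem_iUnion.mp hj
      have hle : i0 ≤ j := hi0min j (by simp [T, hxj])
      exact absurd hji (not_lt.mpr hle)
end

section
/- Let G be a graph, p ≥ 2 an integer, and suppose {V₁, ..., V_p} is a P₃-convex p-cover of G in which every V_i is an independent set. Define V'₁ = V₁ and V'_{i+1} = V_{i+1} \ (V₁ ∪ ... ∪ V_i) for i ≥ 1. Then each nonempty V'_i is P₃-convex, and {V'₁, ..., V'_p} is a partition of V(G) into P₃-convex sets. -/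
theorem stmt_14 {V : Type*} [Fintype V] (G : SimpleGraph V)
    (p : ℕ) (hp : 2 ≤ p) (F : Fin p → Set V)
    (hconv : ∀ i, p3Convex G (F i)) (hproper : ∀ i, F i ≠ Set.univ)
    (hcover : (⋃ i, F i) = Set.univ) (hindep : ∀ i, indepSet G (F i))
    (F' : Fin p → Set V) (hF' : ∀ i, F' i = F i \ ⋃ j < i, F j) :
    (∀ i, p3Convex G (F' i)) ∧ (∀ i j, i ≠ j → Disjoint (F' i) (F' j)) ∧
      (⋃ i, F' i) = Set.univ := by
  have hsub : ∀ i, F' i ⊆ F i := by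
    intro i
    rw [hF' i]; exact Set.diff_subset
  refine ⟨?_, ?_, ?_⟩
  · intro i a b c ha hc hne hab hbc
    exfalso
    have hb : b ∈ F i := hconv i a b c (hsub i ha) (hsub i hc) hne hab hbc
    exact hindep i a (hsub i ha) b hb hab
  · intro i j hne
    rcases lt_or_gt_of_ne hne with h | h
    · rw [Set.disjoint_left]
      intro x hx hx'
      rw [hF' j] at hx'
      exact hx'.2 (Set.mem_biUnion h (hsub i hx))
    · rw [Set.disjoint_right]
      intro x hx hx'
      rw [hF' i] at hx'
      exact hx'.2 (Set.mem_biUnion h (hsub j hx))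
  · apply Set.eq_univ_of_forall
    intro v
    have hv : v ∈ ⋃ i, F i := hcover ▸ Set.mem_univ v
    obtain ⟨i0, hi0⟩ := Set.mem_iUnion.mp hv
    obtain ⟨i, hi, hmin⟩ := wellFounded_lt.has_min {i | v ∈ F i} ⟨i0, hi0⟩
    refine Set.mem_iUnion.mpr ⟨i, ?_⟩
    rw [hF' i]
    refine ⟨hi, ?_⟩
    intro hmem
    obtain ⟨j, hji, hjmem⟩ := Set.mem_iUnion₂.mp hmem
    exact hmin j hjmem hji
end

section
/- Let G be a connected graph, C a clique separator of G, and S the union of the vertex sets of some of the connected components of G − C. Then S ∪ C is a monophonically convex set of G. -/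
/-- A walk is an induced path if it is a path and no two non-consecutive
vertices on it are adjacent (i.e., it has no chord). -/
def IsInducedPath {V : Type*} (G : SimpleGraph V) {u v : V} (p : G.Walk u v) : Prop :=
  p.IsPath ∧ ∀ (i j : ℕ) (hi : i < p.support.length) (hj : j < p.support.length),
    i + 1 < j → ¬ G.Adj p.support[i] p.support[j]

/-- `M` is monophonically convex if every induced path with both endpoints in `M`
lies entirely in `M`. -/
def mConvex {V : Type*} (G : SimpleGraph V) (M : Set V) : Prop :=
  ∀ ⦃u v : V⦄ (p : G.Walk u v), IsInducedPath G p → u ∈ M → v ∈ M →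
    ∀ x ∈ p.support, x ∈ M

lemma reach_aux {V : Type*} (G : SimpleGraph V) (C : Set V) :
    ∀ {u v : V} (p : G.Walk u v) (h : ∀ y ∈ p.support, y ∈ (Cᶜ : Set V)),
    (G.induce (Cᶜ : Set V)).Reachable ⟨u, h u p.start_mem_support⟩ ⟨v, h v p.end_mem_support⟩ := by
  intro u v p
  induction p with
  | nil => intro h; rfl
  | @cons a b c ha q ih =>
    intro h
    have h' : ∀ y ∈ q.support, y ∈ (Cᶜ : Set V) := fun y hy => h y (by simp [hy])
    have hadj : (G.induce (Cᶜ : Set V)).Adj ⟨a, h a (by simp)⟩ ⟨b, h' b q.start_mem_support⟩ := by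
      simpa using ha
    exact hadj.reachable.trans (ih h')

theorem stmt_15 {V : Type*} [Fintype V] (G : SimpleGraph V) (hG : G.Connected)
    (C : Set V) (hC : G.IsClique C)
    (hsep : ¬ (G.induce (Cᶜ : Set V)).Preconnected)
    (T : Set (G.induce (Cᶜ : Set V)).ConnectedComponent)
    (S : Set V) (hS : S = Subtype.val '' (⋃ c ∈ T, c.supp)) :
    mConvex G (S ∪ C) := by
  classical
  intro u v p hp hu hv x hx
  by_contra hxM
  have hxC : x ∈ (Cᶜ : Set V) := fun h => hxM (Or.inr h)
  -- key claim: any walk ending at x whose start is in S ∪ C meets C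
  have claim : ∀ {y : V} (w : G.Walk y x), y ∈ (S ∪ C) → ∃ c ∈ w.support, c ∈ C := by
    intro y w hy
    by_contra hc
    push_neg at hc
    have hall : ∀ z ∈ w.support, z ∈ (Cᶜ : Set V) := hc
    have hreach := reach_aux G C w hall
    have hcomp := SimpleGraph.ConnectedComponent.sound hreach
    rcases hy with h | h
    · rw [hS] at h
      obtain ⟨⟨y', hy'⟩, hy'T, hval⟩ := h
      simp only [Set.mem_iUnion] at hy'T
      obtain ⟨comp, hcompT, hsupp⟩ := hy'T
      rw [SimpleGraph.ConnectedComponent.mem_supp_iff] at hsupp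
      have hyy : (⟨y, hall y w.start_mem_support⟩ : (Cᶜ : Set V)) = ⟨y', hy'⟩ :=
        Subtype.ext hval.symm
      have hxT : (G.induce (Cᶜ : Set V)).connectedComponentMk ⟨x, hall x w.end_mem_support⟩ ∈ T := by
        rw [← hcomp, hyy, hsupp]; exact hcompT
      apply hxM
      left
      rw [hS]
      exact ⟨⟨x, hall x w.end_mem_support⟩,
        Set.mem_biUnion hxT (by rw [SimpleGraph.ConnectedComponent.mem_supp_iff]), rfl⟩
    · exact hall y w.start_mem_support h
  set q := p.takeUntil x hx with hqdef
  set r := p.dropUntil x hx with hrdef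
  obtain ⟨c1, hc1s, hc1C⟩ := claim q hu
  obtain ⟨c2, hc2s', hc2C⟩ := claim r.reverse hv
  rw [SimpleGraph.Walk.support_reverse, List.mem_reverse] at hc2s'
  have hc1x : c1 ≠ x := fun h => hxC (h ▸ hc1C)
  have hc2x : c2 ≠ x := fun h => hxC (h ▸ hc2C)
  -- c2 is in the tail of r.support
  have hc2tail : c2 ∈ r.support.tail := by
    have := (SimpleGraph.Walk.mem_support_iff r).mp hc2s'
    rcases this with h | h
    · exact absurd h hc2x
    · exact h
  -- support decomposition
  have hsupp : p.support = q.support ++ r.support.tail := by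
    conv_lhs => rw [← p.take_spec hx]
    rw [SimpleGraph.Walk.support_append]
  -- indices
  obtain ⟨i, hi, hieq⟩ := List.mem_iff_getElem.mp hc1s
  obtain ⟨j, hj, hjeq⟩ := List.mem_iff_getElem.mp hc2tail
  have hilt : i < q.length := by
    rcases lt_or_eq_of_le (Nat.lt_succ_iff.mp (by simpa [SimpleGraph.Walk.length_support] using hi))
      with h | h
    · exact h
    · exfalso
      apply hc1x
      rw [← hieq]
      have : q.support[i] = q.support.getLast (by simp) := by
        rw [List.getLast_eq_getElem]
        congr 1
        simp [SimpleGraph.Walk.length_support, h]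
      rw [this, SimpleGraph.Walk.getLast_support]
  have hplen : p.support.length = q.support.length + r.support.tail.length := by
    rw [hsupp, List.length_append]
  have hip : i < p.support.length := by omega
  have hjp : q.support.length + j < p.support.length := by omega
  have hpi : p.support[i]'hip = c1 := by
    rw [← hieq]
    have : p.support[i]'hip = (q.support ++ r.support.tail)[i]'(by rw [← hsupp]; omega) := by
      congr 1 <;> rw [hsupp]
    rw [this, List.getElem_append_left (by simpa [SimpleGraph.Walk.length_support] using hilt.trans (Nat.lt_succ_self _))]
  have hpj : p.support[q.support.length + j]'hjp = c2 := by
    rw [← hjeq]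
    have : p.support[q.support.length + j]'hjp
        = (q.support ++ r.support.tail)[q.support.length + j]'(by rw [← hsupp]; omega) := by
      congr 1 <;> rw [hsupp]
    rw [this, List.getElem_append_right (by omega)]
    congr 1
    omega
  have hlt : i + 1 < q.support.length + j := by
    rw [SimpleGraph.Walk.length_support]
    omega
  have hne : c1 ≠ c2 := by
    intro h
    have hnd : p.support.Nodup := hp.1.support_nodup
    rw [hsupp] at hnd
    exact (List.disjoint_of_nodup_append hnd) hc1s (h ▸ hc2tail)
  exact hp.2 i (q.support.length + j) hip hjp hlt (hpi ▸ hpj ▸ hC hc1C hc2C hne)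
end

section
/- If G is a connected graph having a clique separator, then G has a monophonically convex 2-cover: there exist two m-convex sets, each a proper subset of V(G), whose union is V(G). -/
/-!
Let `A` be the vertex set of one component of `G - C`. Both `C ∪ A` and `Aᶜ` are m-convex,
because every edge leaving either set starts in the clique `C`: an induced path that leaves
such a set `M` and comes back exits at a vertex of `C` and re-enters at another vertex of `C`,
and these two are adjacent but not consecutive on the path, a chord.
-/

theorem Nat.exists_mem_Ico_and_not_succ {P : ℕ → Prop} {a b : ℕ} (hab : a ≤ b) (ha : P a)
    (hb : ¬ P b) : ∃ k ∈ Set.Ico a b, P k ∧ ¬ P (k + 1) := by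
  induction b, hab using Nat.le_induction with
  | base => exact absurd ha hb
  | succ b hab ih =>
    by_cases hPb : P b
    · exact ⟨b, ⟨hab, b.lt_succ_self⟩, hPb, hb⟩
    · obtain ⟨k, ⟨hak, hkb⟩, hk⟩ := ih hPb
      exact ⟨k, ⟨hak, hkb.trans b.lt_succ_self⟩, hk⟩

namespace IsInducedPath

variable {V : Type*} {G : SimpleGraph V} {u v : V} {p : G.Walk u v}

theorem not_adj_getVert (hp : IsInducedPath G p) {i j : ℕ} (hij : i + 1 < j)
    (hj : j ≤ p.length) : ¬ G.Adj (p.getVert i) (p.getVert j) := by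
  rw [p.getVert_eq_support_getElem (by omega), p.getVert_eq_support_getElem hj]
  exact hp.2 i j _ _ hij

end IsInducedPath

theorem mConvex_of_isClique_of_adj {V : Type*} {G : SimpleGraph V} {C M : Set V}
    (hC : G.IsClique C) (hM : ∀ a ∈ M, ∀ b ∉ M, G.Adj a b → a ∈ C) : mConvex G M := by
  intro u v p hp hu hv x hx
  by_contra hxM
  obtain ⟨i, rfl, hi⟩ := SimpleGraph.Walk.mem_support_iff_exists_getVert.mp hx
  obtain ⟨a, ⟨-, hai⟩, haM, ha₁⟩ := Nat.exists_mem_Ico_and_not_succ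
    (P := fun k ↦ p.getVert k ∈ M) i.zero_le (by simpa using hu) hxM
  obtain ⟨b, ⟨hib, hbl⟩, hbM, hb₁⟩ := Nat.exists_mem_Ico_and_not_succ
    (P := fun k ↦ p.getVert k ∉ M) hi hxM (by simpa using hv)
  have haC : p.getVert a ∈ C := hM _ haM _ ha₁ (p.adj_getVert_succ (by omega))
  have hbC : p.getVert (b + 1) ∈ C :=
    hM _ (not_not.mp hb₁) _ hbM (p.adj_getVert_succ hbl).symm
  have hne : p.getVert a ≠ p.getVert (b + 1) := fun h ↦ by
    have := hp.1.getVert_injOn (by simp; omega) (by simp; omega) h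
    omega
  exact hp.not_adj_getVert (by omega) (by omega) (hC haC hbC hne)

theorem stmt_16_general {V : Type*} (G : SimpleGraph V)
    (C : Set V) (hC : G.IsClique C)
    (hsep : ¬ (G.induce (Cᶜ : Set V)).Preconnected) :
    ∃ M₁ M₂ : Set V, mConvex G M₁ ∧ mConvex G M₂ ∧
      M₁ ≠ Set.univ ∧ M₂ ≠ Set.univ ∧ M₁ ∪ M₂ = Set.univ := by
  obtain ⟨x, y, hxy⟩ : ∃ x y, ¬ (G.induce (Cᶜ : Set V)).Reachable x y := by
    simpa [SimpleGraph.Preconnected] using hsep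
  let A : Set V := {w | ∃ hw : w ∉ C, (G.induce (Cᶜ : Set V)).Reachable x ⟨w, hw⟩}
  have hA : ∀ a ∈ A, ∀ b ∉ C, G.Adj a b → b ∈ A := fun a ⟨_, hxa⟩ b hb hab ↦
    ⟨hb, hxa.trans (SimpleGraph.Adj.reachable (by exact hab))⟩
  refine ⟨C ∪ A, Aᶜ, mConvex_of_isClique_of_adj hC ?_, mConvex_of_isClique_of_adj hC ?_,
    ?_, ?_, ?_⟩
  · rintro a (haC | haA) b hb hab
    · exact haC
    · exact absurd (hA a haA b (fun h ↦ hb (.inl h)) hab) (fun h ↦ hb (.inr h))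
  · intro a haA b hbA hab
    by_contra haC
    exact haA (hA b (not_not.mp hbA) a haC hab.symm)
  · exact fun h ↦ (h ▸ Set.mem_univ y.1 : y.1 ∈ C ∪ A).elim y.2 fun ⟨_, hxy'⟩ ↦ hxy hxy'
  · exact fun h ↦ (h ▸ Set.mem_univ x.1 : x.1 ∈ Aᶜ) ⟨x.2, .refl _⟩
  · rw [Set.union_assoc, Set.union_compl_self, Set.union_univ]

theorem stmt_16 {V : Type*} [Fintype V] (G : SimpleGraph V) (hG : G.Connected)
    (C : Set V) (hC : G.IsClique C)
    (hsep : ¬ (G.induce (Cᶜ : Set V)).Preconnected) :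
    ∃ M₁ M₂ : Set V, mConvex G M₁ ∧ mConvex G M₂ ∧
      M₁ ≠ Set.univ ∧ M₂ ≠ Set.univ ∧ M₁ ∪ M₂ = Set.univ :=
  stmt_16_general G C hC hsep
end

section
/- If G is a connected graph having no clique separator, then every proper m-convex set of G is a clique. -/
/-!
Let `M` be a proper m-convex set, `a ∉ M`, and `A ⊆ M` the set of vertices at which walks from
`a` first enter `M`. Two vertices of `A` are joined by a walk through `a` that meets `M` only at
its ends; an induced path inside it would leave `M` unless they are adjacent, so `A` is a clique.
As `A` is not a separator, every `b ∈ M` outside `A` is reachable from `a` avoiding `A`; but such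
a walk first enters `M` at a vertex of `A`. Hence `M ⊆ A` is a clique.
-/

namespace SimpleGraph

variable {V : Type*} {G : SimpleGraph V}

def entryPoints (G : SimpleGraph V) (a : V) (M : Set V) : Set V :=
  {m | m ∈ M ∧ ∃ q : G.Walk a m, ∀ z ∈ q.support, z ∈ M → z = m}

namespace Walk

lemma exists_length_lt_of_adj_getVert {u v : V} (p : G.Walk u v) {i j : ℕ} (hij : i + 1 < j)
    (hj : j ≤ p.length) (hadj : G.Adj (p.getVert i) (p.getVert j)) :
    ∃ q : G.Walk u v, q.length < p.length ∧ q.support ⊆ p.support := by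
  refine ⟨(p.take i).append (cons hadj (p.drop j)), ?_, ?_⟩
  · simp only [length_append, length_cons, take_length, drop_length]
    omega
  · intro x hx
    rw [mem_support_append_iff, support_cons, List.mem_cons] at hx
    rcases hx with hx | rfl | hx
    · rw [support_take] at hx
      exact List.mem_of_mem_take hx
    · exact p.getVert_mem_support i
    · rw [drop_support_eq_support_drop_min] at hx
      exact List.mem_of_mem_drop hx

lemma exists_isInducedPath_support_subset {u v : V} (p : G.Walk u v) :
    ∃ q : G.Walk u v, IsInducedPath G q ∧ q.support ⊆ p.support := by
  classical
  induction h : p.length using Nat.strong_induction_on generalizing p with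
  | _ n ih =>
  by_cases hind : IsInducedPath G p.bypass
  · exact ⟨p.bypass, hind, p.support_bypass_subset_support⟩
  simp only [IsInducedPath, p.bypass_isPath, true_and, not_forall, not_not] at hind
  obtain ⟨i, j, hi, hj, hij, hadj⟩ := hind
  rw [length_support] at hi hj
  rw [← getVert_eq_support_getElem _ (by omega), ← getVert_eq_support_getElem _ (by omega)]
    at hadj
  obtain ⟨q, hqlen, hqsub⟩ := p.bypass.exists_length_lt_of_adj_getVert hij (by omega) hadj
  obtain ⟨r, hr, hrsub⟩ := ih q.length (h ▸ hqlen.trans_le p.length_bypass_le_length) q rfl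
  exact ⟨r, hr, List.Subset.trans (List.Subset.trans hrsub hqsub) p.support_bypass_subset_support⟩

lemma exists_mem_support_entryPoints {M : Set V} {a b : V} (p : G.Walk a b) (hb : b ∈ M) :
    ∃ m ∈ p.support, m ∈ entryPoints G a M := by
  induction p with
  | nil => exact ⟨_, start_mem_support _, hb, nil, by simp⟩
  | @cons a c b h p ih =>
    by_cases ha : a ∈ M
    · exact ⟨a, start_mem_support _, ha, nil, by simp⟩
    obtain ⟨m, hmp, hmM, q, hq⟩ := ih hb
    refine ⟨m, List.mem_cons_of_mem _ hmp, hmM, cons h q, ?_⟩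
    rintro z hz hzM
    rcases List.mem_cons.1 hz with rfl | hz
    · exact absurd hzM ha
    · exact hq z hz hzM

end Walk

lemma exists_walk_support_subset_of_preconnected_induce {s : Set V}
    (h : (G.induce s).Preconnected) {a b : V} (ha : a ∈ s) (hb : b ∈ s) :
    ∃ p : G.Walk a b, ∀ z ∈ p.support, z ∈ s := by
  obtain ⟨W⟩ := h ⟨a, ha⟩ ⟨b, hb⟩
  have hW : ∀ z ∈ (W.map (Embedding.induce s).toHom).support, z ∈ s := by
    intro z hz
    rw [Walk.support_map] at hz
    obtain ⟨x, -, rfl⟩ := List.mem_map.1 hz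
    exact x.2
  exact ⟨_, hW⟩

end SimpleGraph

open SimpleGraph

/-- Otherwise an induced path inside the walk would leave `M` right after `x`. -/
lemma mConvex.adj_of_walk {V : Type*} {G : SimpleGraph V} {M : Set V} (hM : mConvex G M)
    {x y : V} (hx : x ∈ M) (hy : y ∈ M) (hxy : x ≠ y) (p : G.Walk x y)
    (hp : ∀ z ∈ p.support, z ∈ M → z = x ∨ z = y) : G.Adj x y := by
  by_contra hnadj
  obtain ⟨q, hq, hqp⟩ := p.exists_isInducedPath_support_subset
  have hqM := hM q hq hx hy
  cases q with
  | nil => exact hxy rfl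
  | @cons _ w _ hxw q' =>
    have hwM : w ∈ M := hqM w (by simp)
    rcases hp w (hqp (by simp)) hwM with rfl | rfl
    · exact hxw.ne rfl
    · exact hnadj hxw

lemma mConvex.isClique_entryPoints {V : Type*} {G : SimpleGraph V} {M : Set V}
    (hM : mConvex G M) (a : V) : G.IsClique (G.entryPoints a M) := by
  rintro x ⟨hx, px, hpx⟩ y ⟨hy, py, hpy⟩ hxy
  refine hM.adj_of_walk hx hy hxy (px.reverse.append py) fun z hz hzM => ?_
  rw [Walk.mem_support_append_iff, Walk.support_reverse, List.mem_reverse] at hz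
  exact hz.imp (hpx z · hzM) (hpy z · hzM)

theorem stmt_17_general {V : Type*} (G : SimpleGraph V)
    (hnosep : ¬ ∃ C : Set V, G.IsClique C ∧ ¬ (G.induce (Cᶜ : Set V)).Preconnected) :
    ∀ M : Set V, mConvex G M → M ≠ Set.univ → G.IsClique M := by
  intro M hM hMne
  by_contra hMcl
  obtain ⟨a, ha⟩ := (Set.ne_univ_iff_exists_notMem M).1 hMne
  have hA := hM.isClique_entryPoints a
  obtain ⟨b, hbM, hbA⟩ : ∃ b ∈ M, b ∉ G.entryPoints a M := by
    by_contra! hMA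
    exact hMcl (hA.subset hMA)
  have hsep : (G.induce (G.entryPoints a M)ᶜ).Preconnected :=
    not_not.1 fun h => hnosep ⟨_, hA, h⟩
  obtain ⟨p, hp⟩ :=
    exists_walk_support_subset_of_preconnected_induce hsep (fun haA => ha haA.1) hbA
  obtain ⟨m, hmp, hmA⟩ := p.exists_mem_support_entryPoints hbM
  exact hp m hmp hmA

theorem stmt_17 {V : Type*} [Fintype V] (G : SimpleGraph V) (hG : G.Connected)
    (hnosep : ¬ ∃ C : Set V, G.IsClique C ∧ ¬ (G.induce (Cᶜ : Set V)).Preconnected) :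
    ∀ M : Set V, mConvex G M → M ≠ Set.univ → G.IsClique M :=
  stmt_17_general G hnosep
end

section
/- Let G be a graph on at least 2 vertices that is not complete, and let G' be obtained from G by adding two new nonadjacent vertices u and v, each adjacent to all vertices of G. Then every m-convex set of G' that is a proper subset of V(G') is a clique of G'. -/
/-- `G` extended by two new nonadjacent vertices (`Sum.inr false` and
`Sum.inr true`), each adjacent to all vertices of `G`. -/
def extendTwo {V : Type*} (G : SimpleGraph V) : SimpleGraph (V ⊕ Bool) where
  Adj a b :=
    match a, b with
    | .inl x, .inl y => G.Adj x y
    | .inl _, .inr _ => True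
    | .inr _, .inl _ => True
    | .inr _, .inr _ => False
  symm := by
    constructor
    intro a b h
    cases a <;> cases b <;> simp_all [SimpleGraph.adj_comm]
  loopless := by
    constructor
    intro a
    cases a <;> simp

/-!
A nonadjacent pair `x, z` in `M` with a common neighbour `y` spans the induced path `x y z`,
so `y ∈ M`. If two vertices of `M` are nonadjacent, they are either two vertices of `G` or the two
new vertices `u, v`; in the first case `u` and `v` are common neighbours, so in both cases
`u, v ∈ M`. Every vertex of `G` is then a common neighbour of `u` and `v`, so `M = V(G')`.
-/

open SimpleGraph

theorem mConvex.mem_of_adj_of_adj {V : Type*} {G : SimpleGraph V} {M : Set V}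
    (hM : mConvex G M) {x y z : V} (hxy : G.Adj x y) (hyz : G.Adj y z) (hxz : x ≠ z)
    (hnxz : ¬ G.Adj x z) (hx : x ∈ M) (hz : z ∈ M) : y ∈ M := by
  have hinduced : IsInducedPath G (Walk.cons hxy (Walk.cons hyz Walk.nil)) := by
    refine ⟨by simp [Walk.isPath_def, hxz, hxy.ne, hyz.ne], fun i j hi hj hij => ?_⟩
    simp only [Walk.support_cons, Walk.support_nil, List.length_cons, List.length_nil] at hi hj
    obtain ⟨rfl, rfl⟩ : i = 0 ∧ j = 2 := by omega
    simpa using hnxz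
  exact hM _ hinduced hx hz y (by simp)

section extendTwo

variable {V : Type*} {G : SimpleGraph V}

@[simp]
theorem extendTwo_adj_inl_inr {x : V} {c : Bool} : (extendTwo G).Adj (.inl x) (.inr c) :=
  trivial

@[simp]
theorem extendTwo_adj_inr_inl {x : V} {c : Bool} : (extendTwo G).Adj (.inr c) (.inl x) :=
  trivial

@[simp]
theorem extendTwo_not_adj_inr_inr {c d : Bool} : ¬ (extendTwo G).Adj (.inr c) (.inr d) :=
  id

theorem mConvex.inr_mem_of_not_adj {M : Set (V ⊕ Bool)} (hM : mConvex (extendTwo G) M)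
    {a b : V ⊕ Bool} (ha : a ∈ M) (hb : b ∈ M) (hab : a ≠ b) (hnab : ¬ (extendTwo G).Adj a b)
    (c : Bool) : .inr c ∈ M := by
  rcases a with x | d <;> rcases b with y | e
  · exact hM.mem_of_adj_of_adj extendTwo_adj_inl_inr extendTwo_adj_inr_inl hab hnab ha hb
  · exact absurd extendTwo_adj_inl_inr hnab
  · exact absurd extendTwo_adj_inr_inl hnab
  · obtain rfl | rfl : c = d ∨ c = e := by cases c <;> cases d <;> cases e <;> simp_all
    exacts [ha, hb]

theorem mConvex.eq_univ_of_inr_mem {M : Set (V ⊕ Bool)}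
    (hM : mConvex (extendTwo G) M) (hinr : ∀ c, .inr c ∈ M) : M = Set.univ := by
  refine Set.eq_univ_of_forall fun
    | .inl x => hM.mem_of_adj_of_adj extendTwo_adj_inr_inl extendTwo_adj_inl_inr
        (by simp) extendTwo_not_adj_inr_inr (hinr false) (hinr true)
    | .inr c => hinr c

end extendTwo

theorem stmt_19_general {V : Type*} (G : SimpleGraph V) :
    ∀ M : Set (V ⊕ Bool), mConvex (extendTwo G) M → M ≠ Set.univ →
      (extendTwo G).IsClique M := by
  intro M hM hne a ha b hb hab
  by_contra hnab
  exact hne (hM.eq_univ_of_inr_mem (hM.inr_mem_of_not_adj ha hb hab hnab))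

theorem stmt_19 {V : Type*} [Fintype V] (G : SimpleGraph V)
    (hcard : 2 ≤ Fintype.card V)
    (hnc : ∃ a b : V, a ≠ b ∧ ¬ G.Adj a b) :
    ∀ M : Set (V ⊕ Bool), mConvex (extendTwo G) M → M ≠ Set.univ →
      (extendTwo G).IsClique M :=
  stmt_19_general G
end
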